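/- Let m > 2 and let ω be a factor of the period-doubling sequence D. (1) If Env(ω) = E_{1,m}, then E_{1,m−2} is a factor of ω. (2) If Env(ω) = E_{2,m}, then E_{1,m−1} is a factor of ω. -/
import Mathlib


/-- The alphabet: letters a, b (for the period-doubling sequence) and c (used by Θ₂). -/
inductive Letter : Type
  | a | b | c
deriving DecidableEq, Repr

open Letter

/-- The period-doubling substitution σ : a ↦ ab, b ↦ aa, extended to words
(the extra letter c is left untouched; it is never produced). -/
def sigmaw : List Letter → List Letter :=
  fun w => w.flatMap fun x => match x with
    | .a => [.a, .b]
    | .b => [.a, .a]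
    | .c => [.c]

/-- A_m = σ^m(a). -/
def A (m : ℕ) : List Letter := sigmaw^[m] [.a]

/-- B_m = σ^m(b). -/
def B (m : ℕ) : List Letter := sigmaw^[m] [.b]

/-- δ_m, the last letter of A_m. -/
def delta (m : ℕ) : Letter := (A m).getLastD .a

/-- The period-doubling sequence D, as a function giving its (n+1)-st letter
(0-indexed); it is the fixed point of σ beginning with a, and A_{n+1} is a
prefix of it of length 2^{n+1} > n. -/
def D (n : ℕ) : Letter := (A (n + 1)).getD n .a

/-- The finite segment D[i .. i+len−1] of the period-doubling sequence,
with 1-based starting position i. -/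
def Dseg (i len : ℕ) : List Letter := (List.range len).map fun k => D (i - 1 + k)

/-- u occurs in the finite word w at (1-based) position i. -/
def OccursAt {α : Type*} (u w : List α) (i : ℕ) : Prop :=
  1 ≤ i ∧ i - 1 + u.length ≤ w.length ∧ (w.drop (i - 1)).take u.length = u

/-- u is a factor of the finite word w. -/
def IsFactor {α : Type*} (u w : List α) : Prop := ∃ i, OccursAt u w i

/-- u occurs in the period-doubling sequence D at (1-based) position i. -/
def DOccursAt (u : List Letter) (i : ℕ) : Prop := 1 ≤ i ∧ Dseg i u.length = u

/-- u is a factor of the period-doubling sequence D. -/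
def FactorD (u : List Letter) : Prop := ∃ i, DOccursAt u i

/-- L(u,p): the starting position of the p-th occurrence (p ≥ 1) of u in D. -/
noncomputable def L (u : List Letter) (p : ℕ) : ℕ := Nat.nth (DOccursAt u) (p - 1)

/-- r_p(u): the p-th return word of u (p ≥ 1), i.e. D[L(u,p) .. L(u,p+1)−1];
r_0(u) is the prefix of D preceding the first occurrence of u. -/
noncomputable def r (u : List Letter) (p : ℕ) : List Letter :=
  if p = 0 then Dseg 1 (L u 1 - 1) else Dseg (L u p) (L u (p + 1) - L u p)

/-- The morphism τ₁ : a ↦ a, b ↦ bb, extended to words. -/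
def tau1 : List Letter → List Letter :=
  fun w => w.flatMap fun x => match x with
    | .a => [.a]
    | .b => [.b, .b]
    | .c => [.c]

/-- The morphism τ₂ : a ↦ ab, b ↦ acac, extended to words. -/
def tau2 : List Letter → List Letter :=
  fun w => w.flatMap fun x => match x with
    | .a => [.a, .b]
    | .b => [.a, .c, .a, .c]
    | .c => [.c]

/-- Θ₁[p], the p-th letter (p ≥ 1) of Θ₁ = τ₁(D): since |τ₁(w)| ≥ |w|, the p-th
letter of Θ₁ is the p-th letter of the image of the length-p prefix of D. -/
def Theta1 (p : ℕ) : Letter := (tau1 (Dseg 1 p)).getD (p - 1) .a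

/-- Θ₂[p], the p-th letter (p ≥ 1) of Θ₂ = τ₂(D). -/
def Theta2 (p : ℕ) : Letter := (tau2 (Dseg 1 p)).getD (p - 1) .a

/-- The envelope word E_{1,m} = A_m with its last letter δ_m deleted. -/
def E1 (m : ℕ) : List Letter := (A m).dropLast

/-- The envelope word E_{2,m} = B_m B_{m−1} with its last letter δ_m deleted. -/
def E2 (m : ℕ) : List Letter := (B m ++ B (m - 1)).dropLast

/-- Enumeration of the envelope words in the order
E_{1,1} ⊏ E_{2,1} ⊏ E_{1,2} ⊏ E_{2,2} ⊏ …. -/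
def Eword (k : ℕ) : List Letter := if k % 2 = 0 then E1 (k / 2 + 1) else E2 (k / 2 + 1)

/-- Env(u): the ⊏-least envelope word having u as a factor. -/
noncomputable def Env (u : List Letter) : List Letter :=
  Eword (sInf {k | IsFactor u (Eword k)})

/-- The letterwise complement exchanging a and b. -/
def comp : Letter → Letter
  | .a => .b
  | .b => .a
  | .c => .c


section Helpers

variable {α : Type*}

lemma seg_infix (z : List α) (d ℓ : ℕ) : (z.drop d).take ℓ <:+: z :=
  ((z.drop d).take_prefix ℓ).isInfix.trans (z.drop_suffix d).isInfix

lemma seg_sub (z : List α) {e L d ℓ : ℕ} (h1 : e ≤ d) (h2 : d + ℓ ≤ e + L) :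
    (z.drop d).take ℓ <:+: (z.drop e).take L := by
  have hd : e + (d - e) = d := by omega
  have hm : ℓ ⊓ (L - (d - e)) = ℓ := by omega
  have key : (((z.drop e).take L).drop (d - e)).take ℓ = (z.drop d).take ℓ := by
    rw [List.drop_take, List.take_take, List.drop_drop, hd, hm]
  exact key ▸ seg_infix ((z.drop e).take L) (d - e) ℓ

lemma master {w w' pre pre' c rest rest' : List α}
    (hw : w = pre ++ (c ++ rest)) (hw' : w' = pre' ++ (c ++ rest'))
    {d ℓ : ℕ} (h1 : pre.length ≤ d) (h2 : d + ℓ ≤ pre.length + c.length) :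
    (w.drop d).take ℓ <:+: w' := by
  have hcw : (w.drop pre.length).take c.length = c := by
    rw [hw, List.drop_left, List.take_left]
  have h3 : (w.drop d).take ℓ <:+: (w.drop pre.length).take c.length :=
    seg_sub w h1 h2
  rw [hcw] at h3
  exact h3.trans ⟨pre', rest', by rw [hw', List.append_assoc]⟩

lemma occAt {w pre qq rest : List α} (h : w = pre ++ (qq ++ rest)) :
    (w.drop pre.length).take qq.length = qq := by
  rw [h, List.drop_left, List.take_left]

lemma isFactor_of_infix {u w : List α} (h : u <:+: w) : IsFactor u w := by
  obtain ⟨s, t, hst⟩ := h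
  have hw : w = s ++ (u ++ t) := by rw [← hst, List.append_assoc]
  have hlen : w.length = s.length + (u.length + t.length) := by
    rw [hw]; simp [List.length_append]
  refine ⟨s.length + 1, by omega, ?_, ?_⟩
  · simp only [Nat.add_sub_cancel]; omega
  · simp only [Nat.add_sub_cancel]
    rw [hw, List.drop_left, List.take_left]

lemma avoid_constraint {w u Q : List α} {d p : ℕ}
    (hu : (w.drop d).take u.length = u) (hQ : (w.drop p).take Q.length = Q)
    (hnot : ¬ IsFactor Q u) (hdp : d ≤ p) (hpq : p + Q.length ≤ d + u.length) : False := by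
  apply hnot
  apply isFactor_of_infix
  have h := seg_sub w hdp hpq
  rwa [hu, hQ] at h

end Helpers

section Seq

lemma sigmaw_append (x y : List Letter) : sigmaw (x ++ y) = sigmaw x ++ sigmaw y := by
  simp [sigmaw]

lemma A_succ_sig (k : ℕ) : A (k + 1) = sigmaw (A k) := by
  rw [A, A, Function.iterate_succ_apply']

lemma B_succ_sig (k : ℕ) : B (k + 1) = sigmaw (B k) := by
  rw [B, B, Function.iterate_succ_apply']

lemma AB_succ (k : ℕ) : A (k + 1) = A k ++ B k ∧ B (k + 1) = A k ++ A k := by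
  induction k with
  | zero => exact ⟨rfl, rfl⟩
  | succ n ih =>
    refine ⟨?_, ?_⟩
    · calc A (n + 1 + 1) = sigmaw (A (n + 1)) := A_succ_sig _
        _ = sigmaw (A n) ++ sigmaw (B n) := by rw [ih.1, sigmaw_append]
        _ = A (n + 1) ++ B (n + 1) := by rw [← A_succ_sig, ← B_succ_sig]
    · calc B (n + 1 + 1) = sigmaw (B (n + 1)) := B_succ_sig _
        _ = sigmaw (A n) ++ sigmaw (A n) := by rw [ih.2, sigmaw_append]
        _ = A (n + 1) ++ A (n + 1) := by rw [← A_succ_sig]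

lemma A_succ (k : ℕ) : A (k + 1) = A k ++ B k := (AB_succ k).1
lemma B_succ (k : ℕ) : B (k + 1) = A k ++ A k := (AB_succ k).2

lemma length_AB (k : ℕ) : (A k).length = 2 ^ k ∧ (B k).length = 2 ^ k := by
  induction k with
  | zero => exact ⟨rfl, rfl⟩
  | succ n ih =>
    have hp : (2:ℕ) ^ (n + 1) = 2 ^ n * 2 := pow_succ 2 n
    constructor
    · rw [A_succ, List.length_append, ih.1, ih.2]; omega
    · rw [B_succ, List.length_append, ih.1]; omega

lemma AB_split (k : ℕ) : ∃ x y : Letter, A k = E1 k ++ [x] ∧ B k = E1 k ++ [y] := by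
  induction k with
  | zero => exact ⟨.a, .b, rfl, rfl⟩
  | succ n ih =>
    obtain ⟨x, y, hA, hB⟩ := ih
    have hE : E1 (n + 1) = A n ++ E1 n := by
      rw [E1, A_succ, hB, ← List.append_assoc, List.dropLast_concat]
    exact ⟨y, x,
      by rw [A_succ, hE, hB]; simp [List.append_assoc],
      by rw [B_succ, hE, hA]; simp [List.append_assoc]⟩

lemma E1_succ (k : ℕ) : E1 (k + 1) = A k ++ E1 k := by
  obtain ⟨x, y, hA, hB⟩ := AB_split k
  rw [E1, A_succ, hB, ← List.append_assoc, List.dropLast_concat]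

lemma E2_succ (k : ℕ) : E2 (k + 1) = B (k + 1) ++ E1 k := by
  obtain ⟨x, y, hA, hB⟩ := AB_split k
  rw [E2]
  simp only [Nat.add_sub_cancel]
  rw [hB, ← List.append_assoc, List.dropLast_concat]

lemma length_E1 (k : ℕ) : (E1 k).length = 2 ^ k - 1 := by
  rw [E1, List.length_dropLast, (length_AB k).1]

lemma length_E2 (k : ℕ) : (E2 (k + 1)).length = 2 ^ (k + 1) + 2 ^ k - 1 := by
  have h1 : (1:ℕ) ≤ 2 ^ k := Nat.one_le_two_pow
  rw [E2_succ, List.length_append, (length_AB (k + 1)).2, length_E1]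
  omega

end Seq

section Windows

/-- Window lemma for E1: a factor of E1 (k+3) that avoids E1 (k+1) is a factor
of E2 (k+2) or of E2 (k+1). -/
lemma lemA (k : ℕ) (u : List Letter) (hu : IsFactor u (E1 (k + 3)))
    (hav : ¬ IsFactor (E1 (k + 1)) u) :
    IsFactor u (E2 (k + 2)) ∨ IsFactor u (E2 (k + 1)) := by
  obtain ⟨x, y, hA, hB⟩ := AB_split k
  obtain ⟨i, hi1, hi2, hi3⟩ := hu
  set d := i - 1 with hd
  have hq1 : (1:ℕ) ≤ 2 ^ k := Nat.one_le_two_pow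
  have lenA : (A k).length = 2 ^ k := (length_AB k).1
  have lenB : (B k).length = 2 ^ k := (length_AB k).2
  have lenP : (E1 k).length = 2 ^ k - 1 := length_E1 k
  have hQ1 : E1 (k + 1) = A k ++ E1 k := E1_succ k
  have hE13 : E1 (k + 3) =
      A k ++ (B k ++ (A k ++ (A k ++ (A k ++ (B k ++ (A k ++ E1 k)))))) := by
    have e3 : E1 (k + 3) = A (k + 2) ++ E1 (k + 2) := E1_succ (k + 2)
    have e2 : E1 (k + 2) = A (k + 1) ++ E1 (k + 1) := E1_succ (k + 1)
    have a2 : A (k + 2) = A (k + 1) ++ B (k + 1) := A_succ (k + 1)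
    rw [e3, e2, hQ1, a2, A_succ k, B_succ k]
    simp [List.append_assoc]
  have hE22 : E2 (k + 2) = A k ++ (B k ++ (A k ++ (B k ++ (A k ++ E1 k)))) := by
    have e2 : E2 (k + 2) = B (k + 2) ++ E1 (k + 1) := E2_succ (k + 1)
    have b2 : B (k + 2) = A (k + 1) ++ A (k + 1) := B_succ (k + 1)
    rw [e2, hQ1, b2, A_succ k]
    simp [List.append_assoc]
  have hE21 : E2 (k + 1) = A k ++ (A k ++ E1 k) := by
    rw [E2_succ k, B_succ k]
    simp [List.append_assoc]
  have lenw : (E1 (k + 3)).length = 8 * 2 ^ k - 1 := by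
    rw [hE13]; simp only [List.length_append, lenA, lenB, lenP]; omega
  have lenQ : (E1 (k + 1)).length = 2 * 2 ^ k - 1 := by
    rw [hQ1, List.length_append, lenA, lenP]; omega
  rw [lenw] at hi2
  -- occurrences of E1 (k+1) in E1 (k+3) at positions 2q, 3q, 4q, 6q
  have occ2 : ((E1 (k + 3)).drop (2 * 2 ^ k)).take (E1 (k + 1)).length = E1 (k + 1) := by
    have hpre : (A k ++ B k).length = 2 * 2 ^ k := by
      rw [List.length_append, lenA, lenB]; omega
    have h := occAt (w := E1 (k + 3)) (pre := A k ++ B k) (qq := E1 (k + 1))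
      (rest := [x] ++ (A k ++ (B k ++ (A k ++ E1 k))))
      (by rw [hE13, hQ1]; nth_rewrite 3 [hA]; simp [List.append_assoc])
    rwa [hpre] at h
  have occ3 : ((E1 (k + 3)).drop (3 * 2 ^ k)).take (E1 (k + 1)).length = E1 (k + 1) := by
    have hpre : (A k ++ (B k ++ A k)).length = 3 * 2 ^ k := by
      simp only [List.length_append, lenA, lenB]; omega
    have h := occAt (w := E1 (k + 3)) (pre := A k ++ (B k ++ A k)) (qq := E1 (k + 1))
      (rest := [x] ++ (B k ++ (A k ++ E1 k)))
      (by rw [hE13, hQ1]; nth_rewrite 4 [hA]; simp [List.append_assoc])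
    rwa [hpre] at h
  have occ4 : ((E1 (k + 3)).drop (4 * 2 ^ k)).take (E1 (k + 1)).length = E1 (k + 1) := by
    have hpre : (A k ++ (B k ++ (A k ++ A k))).length = 4 * 2 ^ k := by
      simp only [List.length_append, lenA, lenB]; omega
    have h := occAt (w := E1 (k + 3)) (pre := A k ++ (B k ++ (A k ++ A k)))
      (qq := E1 (k + 1)) (rest := [y] ++ (A k ++ E1 k))
      (by rw [hE13, hQ1]; nth_rewrite 2 [hB]; simp [List.append_assoc])
    rwa [hpre] at h
  have occ6 : ((E1 (k + 3)).drop (6 * 2 ^ k)).take (E1 (k + 1)).length = E1 (k + 1) := by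
    have hpre : (A k ++ (B k ++ (A k ++ (A k ++ (A k ++ B k))))).length = 6 * 2 ^ k := by
      simp only [List.length_append, lenA, lenB]; omega
    have h := occAt (w := E1 (k + 3)) (pre := A k ++ (B k ++ (A k ++ (A k ++ (A k ++ B k)))))
      (qq := E1 (k + 1)) (rest := ([] : List Letter))
      (by rw [hE13, hQ1]; simp [List.append_assoc])
    rwa [hpre] at h
  have n2 : ¬ (d ≤ 2 * 2 ^ k ∧ 2 * 2 ^ k + (E1 (k + 1)).length ≤ d + u.length) :=
    fun hcc => avoid_constraint hi3 occ2 hav hcc.1 hcc.2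
  have n3 : ¬ (d ≤ 3 * 2 ^ k ∧ 3 * 2 ^ k + (E1 (k + 1)).length ≤ d + u.length) :=
    fun hcc => avoid_constraint hi3 occ3 hav hcc.1 hcc.2
  have n4 : ¬ (d ≤ 4 * 2 ^ k ∧ 4 * 2 ^ k + (E1 (k + 1)).length ≤ d + u.length) :=
    fun hcc => avoid_constraint hi3 occ4 hav hcc.1 hcc.2
  have n6 : ¬ (d ≤ 6 * 2 ^ k ∧ 6 * 2 ^ k + (E1 (k + 1)).length ≤ d + u.length) :=
    fun hcc => avoid_constraint hi3 occ6 hav hcc.1 hcc.2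
  rcases le_or_gt d (2 * 2 ^ k) with hc | hc
  · left
    apply isFactor_of_infix
    have hM : ((E1 (k + 3)).drop d).take u.length <:+: E2 (k + 2) :=
      master (pre := ([] : List Letter)) (c := A k ++ (B k ++ (A k ++ E1 k)))
        (rest := [x] ++ (A k ++ (B k ++ (A k ++ E1 k))))
        (pre' := ([] : List Letter)) (rest' := [y] ++ (A k ++ E1 k))
        (by rw [hE13]; nth_rewrite 3 [hA]; simp [List.append_assoc])
        (by rw [hE22]; nth_rewrite 2 [hB]; simp [List.append_assoc])
        (by simp)
        (by simp only [List.length_nil, List.length_append, lenA, lenB, lenP]; omega)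
    rwa [hi3] at hM
  rcases le_or_gt d (3 * 2 ^ k) with hc2 | hc2
  · right
    apply isFactor_of_infix
    have hM : ((E1 (k + 3)).drop d).take u.length <:+: E2 (k + 1) :=
      master (pre := A k ++ B k) (c := A k ++ (A k ++ E1 k))
        (rest := [x] ++ (B k ++ (A k ++ E1 k)))
        (pre' := ([] : List Letter)) (rest' := ([] : List Letter))
        (by rw [hE13]; nth_rewrite 4 [hA]; simp [List.append_assoc])
        (by rw [hE21]; simp)
        (by simp only [List.length_append, lenA, lenB]; omega)
        (by simp only [List.length_append, lenA, lenB, lenP]; omega)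
    rwa [hi3] at hM
  rcases le_or_gt d (4 * 2 ^ k) with hc3 | hc3
  · right
    apply isFactor_of_infix
    have hM : ((E1 (k + 3)).drop d).take u.length <:+: E2 (k + 1) :=
      master (pre := A k ++ (B k ++ A k)) (c := A k ++ (A k ++ E1 k))
        (rest := [y] ++ (A k ++ E1 k))
        (pre' := ([] : List Letter)) (rest' := ([] : List Letter))
        (by rw [hE13]; nth_rewrite 2 [hB]; simp [List.append_assoc])
        (by rw [hE21]; simp)
        (by simp only [List.length_append, lenA, lenB]; omega)
        (by simp only [List.length_append, lenA, lenB, lenP]; omega)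
    rwa [hi3] at hM
  rcases le_or_gt d (6 * 2 ^ k) with hc4 | hc4
  · left
    apply isFactor_of_infix
    have hM : ((E1 (k + 3)).drop d).take u.length <:+: E2 (k + 2) :=
      master (pre := A k ++ (B k ++ (A k ++ A k))) (c := A k ++ (B k ++ (A k ++ E1 k)))
        (rest := ([] : List Letter))
        (pre' := ([] : List Letter)) (rest' := [y] ++ (A k ++ E1 k))
        (by rw [hE13]; simp [List.append_assoc])
        (by rw [hE22]; nth_rewrite 2 [hB]; simp [List.append_assoc])
        (by simp only [List.length_append, lenA, lenB]; omega)
        (by simp only [List.length_append, lenA, lenB, lenP]; omega)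
    rwa [hi3] at hM
  · left
    apply isFactor_of_infix
    have hM : ((E1 (k + 3)).drop d).take u.length <:+: E2 (k + 2) :=
      master (pre := A k ++ (B k ++ (A k ++ (A k ++ (A k ++ B k)))))
        (c := A k ++ E1 k) (rest := ([] : List Letter))
        (pre' := A k ++ (B k ++ (A k ++ B k))) (rest' := ([] : List Letter))
        (by rw [hE13]; simp [List.append_assoc])
        (by rw [hE22]; simp [List.append_assoc])
        (by simp only [List.length_append, lenA, lenB]; omega)
        (by simp only [List.length_append, lenA, lenB, lenP]; omega)
    rwa [hi3] at hM

end Windows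

section WindowsB

/-- Window lemma for E2: a factor of E2 (k+3) that avoids E1 (k+2) is a factor
of E1 (k+3). -/
lemma lemB (k : ℕ) (u : List Letter) (hu : IsFactor u (E2 (k + 3)))
    (hav : ¬ IsFactor (E1 (k + 2)) u) : IsFactor u (E1 (k + 3)) := by
  obtain ⟨x, y, hA, hB⟩ := AB_split k
  obtain ⟨i, hi1, hi2, hi3⟩ := hu
  set d := i - 1 with hd
  have hq1 : (1:ℕ) ≤ 2 ^ k := Nat.one_le_two_pow
  have lenA : (A k).length = 2 ^ k := (length_AB k).1
  have lenB : (B k).length = 2 ^ k := (length_AB k).2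
  have lenP : (E1 k).length = 2 ^ k - 1 := length_E1 k
  have hQ1 : E1 (k + 1) = A k ++ E1 k := E1_succ k
  have hQ2 : E1 (k + 2) = A k ++ (B k ++ (A k ++ E1 k)) := by
    have e2 : E1 (k + 2) = A (k + 1) ++ E1 (k + 1) := E1_succ (k + 1)
    rw [e2, hQ1, A_succ k]
    simp [List.append_assoc]
  have hE13 : E1 (k + 3) =
      A k ++ (B k ++ (A k ++ (A k ++ (A k ++ (B k ++ (A k ++ E1 k)))))) := by
    have e3 : E1 (k + 3) = A (k + 2) ++ E1 (k + 2) := E1_succ (k + 2)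
    have a2 : A (k + 2) = A (k + 1) ++ B (k + 1) := A_succ (k + 1)
    rw [e3, hQ2, a2, A_succ k, B_succ k]
    simp [List.append_assoc]
  have hE23 : E2 (k + 3) =
      A k ++ (B k ++ (A k ++ (A k ++ (A k ++ (B k ++ (A k ++ (A k ++
        (A k ++ (B k ++ (A k ++ E1 k)))))))))) := by
    have e3 : E2 (k + 3) = B (k + 3) ++ E1 (k + 2) := E2_succ (k + 2)
    have b3 : B (k + 3) = A (k + 2) ++ A (k + 2) := B_succ (k + 2)
    have a2 : A (k + 2) = A (k + 1) ++ B (k + 1) := A_succ (k + 1)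
    rw [e3, hQ2, b3, a2, A_succ k, B_succ k]
    simp [List.append_assoc]
  have lenw : (E2 (k + 3)).length = 12 * 2 ^ k - 1 := by
    rw [hE23]; simp only [List.length_append, lenA, lenB, lenP]; omega
  have lenQ2 : (E1 (k + 2)).length = 4 * 2 ^ k - 1 := by
    rw [hQ2]; simp only [List.length_append, lenA, lenB, lenP]; omega
  rw [lenw] at hi2
  -- occurrences of E1 (k+2) in E2 (k+3) at positions 4q and 8q
  have occ4 : ((E2 (k + 3)).drop (4 * 2 ^ k)).take (E1 (k + 2)).length = E1 (k + 2) := by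
    have hpre : (A k ++ (B k ++ (A k ++ A k))).length = 4 * 2 ^ k := by
      simp only [List.length_append, lenA, lenB]; omega
    have h := occAt (w := E2 (k + 3)) (pre := A k ++ (B k ++ (A k ++ A k)))
      (qq := E1 (k + 2)) (rest := [x] ++ (A k ++ (B k ++ (A k ++ E1 k))))
      (by rw [hE23, hQ2]; nth_rewrite 6 [hA]; simp [List.append_assoc])
    rwa [hpre] at h
  have occ8 : ((E2 (k + 3)).drop (8 * 2 ^ k)).take (E1 (k + 2)).length = E1 (k + 2) := by
    have hpre : (A k ++ (B k ++ (A k ++ (A k ++ (A k ++ (B k ++ (A k ++ A k))))))).length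
        = 8 * 2 ^ k := by
      simp only [List.length_append, lenA, lenB]; omega
    have h := occAt (w := E2 (k + 3))
      (pre := A k ++ (B k ++ (A k ++ (A k ++ (A k ++ (B k ++ (A k ++ A k)))))))
      (qq := E1 (k + 2)) (rest := ([] : List Letter))
      (by rw [hE23, hQ2]; simp [List.append_assoc])
    rwa [hpre] at h
  have n4 : ¬ (d ≤ 4 * 2 ^ k ∧ 4 * 2 ^ k + (E1 (k + 2)).length ≤ d + u.length) :=
    fun hcc => avoid_constraint hi3 occ4 hav hcc.1 hcc.2
  have n8 : ¬ (d ≤ 8 * 2 ^ k ∧ 8 * 2 ^ k + (E1 (k + 2)).length ≤ d + u.length) :=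
    fun hcc => avoid_constraint hi3 occ8 hav hcc.1 hcc.2
  apply isFactor_of_infix
  rcases le_or_gt d (4 * 2 ^ k) with hc | hc
  · have hM : ((E2 (k + 3)).drop d).take u.length <:+: E1 (k + 3) :=
      master (pre := ([] : List Letter))
        (c := A k ++ (B k ++ (A k ++ (A k ++ (A k ++ (B k ++ (A k ++ E1 k)))))))
        (rest := [x] ++ (A k ++ (B k ++ (A k ++ E1 k))))
        (pre' := ([] : List Letter)) (rest' := ([] : List Letter))
        (by rw [hE23]; nth_rewrite 6 [hA]; simp [List.append_assoc])
        (by rw [hE13]; simp)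
        (by simp)
        (by simp only [List.length_nil, List.length_append, lenA, lenB, lenP]; omega)
    rwa [hi3] at hM
  rcases le_or_gt d (8 * 2 ^ k) with hc2 | hc2
  · have hM : ((E2 (k + 3)).drop d).take u.length <:+: E1 (k + 3) :=
      master (pre := A k ++ (B k ++ (A k ++ A k)))
        (c := A k ++ (B k ++ (A k ++ (A k ++ (A k ++ (B k ++ (A k ++ E1 k)))))))
        (rest := ([] : List Letter))
        (pre' := ([] : List Letter)) (rest' := ([] : List Letter))
        (by rw [hE23]; simp [List.append_assoc])
        (by rw [hE13]; simp)
        (by simp only [List.length_append, lenA, lenB]; omega)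
        (by simp only [List.length_append, lenA, lenB, lenP]; omega)
    rwa [hi3] at hM
  · have hM : ((E2 (k + 3)).drop d).take u.length <:+: E1 (k + 3) :=
      master (pre := A k ++ (B k ++ (A k ++ (A k ++ (A k ++ (B k ++ (A k ++ A k)))))))
        (c := A k ++ (B k ++ (A k ++ E1 k)))
        (rest := ([] : List Letter))
        (pre' := ([] : List Letter)) (rest' := [x] ++ (A k ++ (B k ++ (A k ++ E1 k))))
        (by rw [hE23]; simp [List.append_assoc])
        (by rw [hE13]; nth_rewrite 3 [hA]; simp [List.append_assoc])
        (by simp only [List.length_append, lenA, lenB]; omega)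
        (by simp only [List.length_append, lenA, lenB, lenP]; omega)
    rwa [hi3] at hM

end WindowsB

section EwordLemmas

lemma Eword_even (n : ℕ) : Eword (2 * n) = E1 (n + 1) := by
  rw [Eword, if_pos (by omega : 2 * n % 2 = 0)]
  congr 1
  omega

lemma Eword_odd (n : ℕ) : Eword (2 * n + 1) = E2 (n + 1) := by
  rw [Eword, if_neg (by omega : ¬ (2 * n + 1) % 2 = 0)]
  congr 1
  omega

lemma Eword_len_mono : StrictMono fun j => (Eword j).length := by
  apply strictMono_nat_of_lt_succ
  intro j
  rcases Nat.even_or_odd j with ⟨t, ht⟩ | ⟨t, ht⟩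
  · obtain rfl : j = 2 * t := by omega
    have h1 : Eword (2 * t) = E1 (t + 1) := Eword_even t
    have h2 : Eword (2 * t + 1) = E2 (t + 1) := Eword_odd t
    simp only [h1, h2, length_E1, length_E2]
    have p1 : (2:ℕ) ^ (t + 1) = 2 * 2 ^ t := by ring
    have hq : (1:ℕ) ≤ 2 ^ t := Nat.one_le_two_pow
    omega
  · obtain rfl : j = 2 * t + 1 := by omega
    have h1 : Eword (2 * t + 1) = E2 (t + 1) := Eword_odd t
    have h2 : Eword (2 * t + 1 + 1) = E1 (t + 2) := by
      have : Eword (2 * (t + 1)) = E1 (t + 1 + 1) := Eword_even (t + 1)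
      rw [show 2 * t + 1 + 1 = 2 * (t + 1) by ring, this]
    simp only [h1, h2, length_E1, length_E2]
    have p1 : (2:ℕ) ^ (t + 1) = 2 * 2 ^ t := by ring
    have p2 : (2:ℕ) ^ (t + 2) = 4 * 2 ^ t := by ring
    have hq : (1:ℕ) ≤ 2 ^ t := Nat.one_le_two_pow
    omega

end EwordLemmas

theorem envelope_word_inside' (m : ℕ) (hm : 2 < m) (ω : List Letter)
    (hfac : FactorD ω) :
    (Env ω = E1 m → IsFactor (E1 (m - 2)) ω) ∧
    (Env ω = E2 m → IsFactor (E1 (m - 1)) ω) := by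
  obtain ⟨n, rfl⟩ : ∃ n, m = n + 3 := ⟨m - 3, by omega⟩
  have hq : (1:ℕ) ≤ 2 ^ n := Nat.one_le_two_pow
  have p3 : (2:ℕ) ^ (n + 3) = 8 * 2 ^ n := by ring
  have p2 : (2:ℕ) ^ (n + 2) = 4 * 2 ^ n := by ring
  constructor
  · intro h
    rw [show n + 3 - 2 = n + 1 by omega]
    unfold Env at h
    by_cases hne : {k | IsFactor ω (Eword k)}.Nonempty
    · have hmem := Nat.sInf_mem hne
      simp only [Set.mem_setOf_eq] at hmem
      have h24 : Eword (2 * (n + 2)) = E1 (n + 3) := by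
        have := Eword_even (n + 2)
        rwa [show n + 2 + 1 = n + 3 by omega] at this
      have hk : sInf {k | IsFactor ω (Eword k)} = 2 * (n + 2) :=
        Eword_len_mono.injective (by rw [h, h24])
      rw [hk, h24] at hmem
      have not3 : ¬ IsFactor ω (E2 (n + 2)) := by
        intro hf
        have hmem' : (2 * (n + 1) + 1) ∈ {k | IsFactor ω (Eword k)} := by
          simp only [Set.mem_setOf_eq, Eword_odd]
          exact hf
        have := Nat.sInf_le hmem'
        omega
      have not1 : ¬ IsFactor ω (E2 (n + 1)) := by
        intro hf
        have hmem' : (2 * n + 1) ∈ {k | IsFactor ω (Eword k)} := by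
          simp only [Set.mem_setOf_eq, Eword_odd]
          exact hf
        have := Nat.sInf_le hmem'
        omega
      by_contra hcon
      rcases lemA n ω hmem hcon with h' | h'
      · exact not3 h'
      · exact not1 h'
    · exfalso
      rw [Set.not_nonempty_iff_eq_empty] at hne
      rw [hne, Nat.sInf_empty] at h
      have h0 : Eword 0 = E1 1 := Eword_even 0
      rw [h0] at h
      have := congrArg List.length h
      rw [length_E1, length_E1] at this
      omega
  · intro h
    rw [show n + 3 - 1 = n + 2 by omega]
    unfold Env at h
    by_cases hne : {k | IsFactor ω (Eword k)}.Nonempty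
    · have hmem := Nat.sInf_mem hne
      simp only [Set.mem_setOf_eq] at hmem
      have h25 : Eword (2 * (n + 2) + 1) = E2 (n + 3) := by
        have := Eword_odd (n + 2)
        rwa [show n + 2 + 1 = n + 3 by omega] at this
      have hk : sInf {k | IsFactor ω (Eword k)} = 2 * (n + 2) + 1 :=
        Eword_len_mono.injective (by rw [h, h25])
      rw [hk, h25] at hmem
      have not4 : ¬ IsFactor ω (E1 (n + 3)) := by
        intro hf
        have hmem' : (2 * (n + 2)) ∈ {k | IsFactor ω (Eword k)} := by
          simp only [Set.mem_setOf_eq, Eword_even]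
          rwa [show n + 2 + 1 = n + 3 by omega]
        have := Nat.sInf_le hmem'
        omega
      by_contra hcon
      exact not4 (lemB n ω hmem hcon)
    · exfalso
      rw [Set.not_nonempty_iff_eq_empty] at hne
      rw [hne, Nat.sInf_empty] at h
      have h0 : Eword 0 = E1 1 := Eword_even 0
      rw [h0] at h
      have := congrArg List.length h
      rw [length_E1, length_E2] at this
      omega

/-- Let m > 2 and ω a factor of D. (1) If Env(ω) = E_{1,m}, then
E_{1,m−2} is a factor of ω. (2) If Env(ω) = E_{2,m}, then E_{1,m−1} is a factor
of ω. -/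
theorem envelope_word_inside (m : ℕ) (hm : 2 < m) (ω : List Letter)
    (hfac : FactorD ω) :
    (Env ω = E1 m → IsFactor (E1 (m - 2)) ω) ∧
    (Env ω = E2 m → IsFactor (E1 (m - 1)) ω) :=
  envelope_word_inside' m hm ω hfac
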